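/- arXiv:2409.18879 — 3 statements merged into one kernel-verified Lean document; each statement's English description precedes it below -/
import Mathlib

section
/- Let 0 < b < 1, E > 0 and d_m > 0. Set h = H(d_m; b, E, 1) and r_m = (1/2)·log h. Then b < e^{r_m} < 1, the quantity GR₅₀ = E·(1 - e^{r_m})/(e^{r_m} - b) satisfies 0 < GR₅₀ < d_m, and H(GR₅₀; b, E, 1) = e^{r_m}; equivalently, H(GR₅₀; b, E, 1)² = H(d_m; b, E, 1), i.e., the log-drug-effect at concentration GR₅₀ is exactly half the log-drug-effect at the maximal tested concentration d_m. -/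
/-- The Hill equation with Hill coefficient `m = 1`:
`H(d; b, E, 1) = b + (1 - b) / (1 + d / E)`. -/
noncomputable def hill1 (b E d : ℝ) : ℝ :=
  b + (1 - b) / (1 + d / E)

/-- Let `0 < b < 1`, `E > 0` and `d_m > 0`. Set `h = H(d_m; b, E, 1)` and
`r_m = (1/2)·log h`. Then `b < e^{r_m} < 1`, the quantity
`GR₅₀ = E·(1 - e^{r_m})/(e^{r_m} - b)` satisfies `0 < GR₅₀ < d_m`, and
`H(GR₅₀; b, E, 1) = e^{r_m}`; equivalently `H(GR₅₀; b, E, 1)² = H(d_m; b, E, 1)`,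
i.e. the log-drug-effect at concentration `GR₅₀` is exactly half the log-drug-effect
at the maximal tested concentration `d_m`. -/
theorem gr50_props
    (b E dm : ℝ) (hb0 : 0 < b) (hb1 : b < 1) (hE : 0 < E) (hdm : 0 < dm)
    (rm : ℝ) (hrm : rm = (1 / 2) * Real.log (hill1 b E dm))
    (GR50 : ℝ) (hGR50 : GR50 = E * (1 - Real.exp rm) / (Real.exp rm - b)) :
    b < Real.exp rm ∧ Real.exp rm < 1 ∧
      0 < GR50 ∧ GR50 < dm ∧
      hill1 b E GR50 = Real.exp rm ∧
      (hill1 b E GR50) ^ 2 = hill1 b E dm := by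
  set h := hill1 b E dm with hh
  have hden : (0:ℝ) < 1 + dm / E := by positivity
  have hbh : b < h := by
    have : 0 < (1 - b) / (1 + dm / E) := div_pos (by linarith) hden
    simp only [hh, hill1]; linarith
  have hh1 : h < 1 := by
    have key : (1 - b) / (1 + dm / E) < 1 - b := by
      rw [div_lt_iff₀ hden]
      nlinarith [div_pos hdm hE]
    simp only [hh, hill1]; linarith
  have hh0 : 0 < h := lt_trans hb0 hbh
  set s := Real.exp rm with hs
  have hs0 : 0 < s := Real.exp_pos rm
  have hsq : s ^ 2 = h := by
    rw [hs, hrm, ← Real.exp_nat_mul]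
    push_cast
    rw [show (2:ℝ) * ((1/2) * Real.log h) = Real.log h by ring, Real.exp_log hh0]
  have hbs : b < s := by
    refine lt_of_pow_lt_pow_left₀ 2 hs0.le ?_
    rw [hsq]; nlinarith
  have hs1 : s < 1 := by
    have := lt_of_pow_lt_pow_left₀ 2 (zero_le_one) (a := s) (b := 1)
      (by rw [hsq]; simpa using hh1)
    exact this
  have hsb : 0 < s - b := by linarith
  have h1s : 0 < 1 - s := by linarith
  have hG0 : 0 < GR50 := by
    rw [hGR50]; positivity
  have hdm_eq : dm = E * (1 - h) / (h - b) := by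
    have hden' : (1 + dm / E) ≠ 0 := ne_of_gt hden
    have hE' : E ≠ 0 := ne_of_gt hE
    have hhb' : h - b ≠ 0 := ne_of_gt (by linarith)
    have hhd : h = b + (1 - b) / (1 + dm / E) := hh
    field_simp at hhd
    rw [eq_div_iff hhb']
    nlinarith [hhd]
  have hGlt : GR50 < dm := by
    rw [hGR50, hdm_eq, ← hsq, div_lt_div_iff₀ hsb (by nlinarith : (0:ℝ) < s ^ 2 - b)]
    nlinarith [mul_pos (mul_pos (mul_pos hE h1s) hs0) (sub_pos.mpr hb1)]
  have hhill : hill1 b E GR50 = s := by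
    have hE' : E ≠ 0 := ne_of_gt hE
    have hsb' : s - b ≠ 0 := ne_of_gt hsb
    have hdenG : 1 + GR50 / E = (1 - b) / (s - b) := by
      rw [hGR50]; field_simp; ring
    have h1b : (1:ℝ) - b ≠ 0 := by linarith
    have hkey : (1 - b) / ((1 - b) / (s - b)) = s - b := by
      field_simp
    rw [hill1, hdenG, hkey]
    ring
  exact ⟨hbs, hs1, hG0, hGlt, hhill, by rw [hhill, hsq]⟩
end

section
/- Let K be a positive integer, A a real K×K matrix, and C : ℝ → (K×K real matrices) a continuous map. Define D(t) = ∫₀ᵗ exp((t-τ)A)ᵀ · C(τ) · exp((t-τ)A) dτ. Then D(0) = 0 and, for every real t, D is differentiable at t with derivative D'(t) = Aᵀ·D(t) + D(t)·A + C(t); that is, D is a solution of the Lyapunov matrix differential equation with zero initial condition. -/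
open Matrix intervalIntegral

attribute [local instance] Matrix.linftyOpNormedRing Matrix.linftyOpNormedAlgebra

/-- Let `K` be a positive integer, `A` a real `K×K` matrix, and `C : ℝ → (K×K real matrices)`
a continuous map. Define `D(t) = ∫₀ᵗ exp((t-τ)A)ᵀ · C(τ) · exp((t-τ)A) dτ` (entrywise).
Then `D(0) = 0` and, for every real `t`, `D` is differentiable at `t` (entrywise) with
derivative `D'(t) = Aᵀ·D(t) + D(t)·A + C(t)`; that is, `D` solves the Lyapunov matrix
differential equation with zero initial condition. -/
theorem lyapunov_matrix_ode_solution
    (K : ℕ) (hK : 0 < K) (A : Matrix (Fin K) (Fin K) ℝ)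
    (C : ℝ → Matrix (Fin K) (Fin K) ℝ) (hC : Continuous C)
    (D : ℝ → Matrix (Fin K) (Fin K) ℝ)
    (hD : ∀ (t : ℝ) (i j : Fin K),
      D t i j = ∫ τ in (0:ℝ)..t,
        ((NormedSpace.exp ((t - τ) • A))ᵀ * C τ * NormedSpace.exp ((t - τ) • A)) i j) :
    D 0 = 0 ∧
      ∀ (t : ℝ) (i j : Fin K),
        HasDerivAt (fun s => D s i j) ((Aᵀ * D t + D t * A + C t) i j) t := by
  set M : ℝ → Matrix (Fin K) (Fin K) ℝ := fun s => NormedSpace.exp (s • A) with hMdef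
  have hMcont : Continuous M :=
    NormedSpace.exp_continuous.comp (continuous_id.smul continuous_const)
  have hMadd : ∀ s u : ℝ, M (s + u) = M s * M u := by
    intro s u
    have hcomm : Commute (s • A) (u • A) := ((Commute.refl A).smul_right u).smul_left s
    rw [hMdef]
    simp only [add_smul]
    exact Matrix.exp_add_of_commute _ _ hcomm
  have hMzero : M 0 = 1 := by simp [hMdef, NormedSpace.exp_zero]
  have hMinv : ∀ t : ℝ, M (-t) * M t = 1 := by
    intro t
    rw [← hMadd, neg_add_cancel, hMzero]
  set g : ℝ → Matrix (Fin K) (Fin K) ℝ := fun τ => (M (-τ))ᵀ * C τ * M (-τ) with hgdef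
  have hMn : Continuous fun τ : ℝ => M (-τ) := hMcont.comp continuous_neg
  have hg : Continuous g := (hMn.matrix_transpose.mul hC).mul hMn
  set E : ℝ → Matrix (Fin K) (Fin K) ℝ := fun t => ∫ τ in (0:ℝ)..t, g τ with hEdef
  have hEder : ∀ t : ℝ, HasDerivAt E (g t) t := fun t =>
    (hg.integral_hasStrictDerivAt 0 t).hasDerivAt
  -- entry evaluation as a continuous linear map
  set e : Fin K → Fin K → (Matrix (Fin K) (Fin K) ℝ →L[ℝ] ℝ) := fun i j =>
    LinearMap.toContinuousLinearMap
      ((LinearMap.proj j).comp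
        (LinearMap.proj i : Matrix (Fin K) (Fin K) ℝ →ₗ[ℝ] (Fin K → ℝ))) with hedef
  have he : ∀ (i j : Fin K) (X : Matrix (Fin K) (Fin K) ℝ), e i j X = X i j := by
    intro i j X
    rw [hedef]
    rfl
  -- key factorization
  have key : ∀ t : ℝ, D t = (M t)ᵀ * E t * M t := by
    intro t
    funext i j
    set L : Matrix (Fin K) (Fin K) ℝ →L[ℝ] Matrix (Fin K) (Fin K) ℝ :=
      ContinuousLinearMap.mulLeftRight ℝ _ (M t)ᵀ (M t) with hLdef
    have hLapp : ∀ X : Matrix (Fin K) (Fin K) ℝ, L X = (M t)ᵀ * X * M t := by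
      intro X
      rw [hLdef]; rfl
    have h1 : ∀ τ : ℝ,
        ((NormedSpace.exp ((t - τ) • A))ᵀ * C τ * NormedSpace.exp ((t - τ) • A)) i j
          = ((e i j).comp L) (g τ) := by
      intro τ
      have hts : NormedSpace.exp ((t - τ) • A) = M (-τ) * M t := by
        have h0 : t - τ = -τ + t := by ring
        rw [h0, ← hMadd]
      rw [ContinuousLinearMap.comp_apply, he, hLapp, hts, hgdef]
      simp only [transpose_mul, mul_assoc]
    rw [hD t i j]
    calc (∫ τ in (0:ℝ)..t,
          ((NormedSpace.exp ((t - τ) • A))ᵀ * C τ * NormedSpace.exp ((t - τ) • A)) i j)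
        = ∫ τ in (0:ℝ)..t, ((e i j).comp L) (g τ) := by simp_rw [h1]
      _ = ((e i j).comp L) (E t) :=
          ContinuousLinearMap.intervalIntegral_comp_comm _ (hg.intervalIntegrable 0 t)
      _ = ((M t)ᵀ * E t * M t) i j := by
          rw [ContinuousLinearMap.comp_apply, he, hLapp]
  constructor
  · funext i j
    rw [hD 0 i j, intervalIntegral.integral_same]
    rfl
  · intro t i j
    -- derivatives of the three factors
    have hMder : HasDerivAt M (M t * A) t := hasDerivAt_exp_smul_const A t
    have hexpT : ∀ s : ℝ, (M s)ᵀ = NormedSpace.exp (s • Aᵀ) := by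
      intro s
      rw [hMdef]
      rw [← Matrix.transpose_smul, Matrix.exp_transpose]
    have hMTder : HasDerivAt (fun s => (M s)ᵀ) (Aᵀ * (M t)ᵀ) t := by
      simp only [hexpT]
      exact hasDerivAt_exp_smul_const' Aᵀ t
    have hprod := (hMTder.mul (hEder t)).mul hMder
    have hmid : (M t)ᵀ * g t * M t = C t := by
      have h1 : (M t)ᵀ * (M (-t))ᵀ = 1 := by
        rw [← transpose_mul, hMinv, transpose_one]
      calc (M t)ᵀ * g t * M t
          = ((M t)ᵀ * (M (-t))ᵀ) * C t * (M (-t) * M t) := by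
            rw [hgdef]; noncomm_ring
        _ = C t := by rw [h1, hMinv, one_mul, mul_one]
    have hval : (Aᵀ * (M t)ᵀ * E t + (M t)ᵀ * g t) * M t + (M t)ᵀ * E t * (M t * A)
        = Aᵀ * D t + D t * A + C t := by
      rw [key t, add_mul, hmid]
      noncomm_ring
    simp only [Pi.mul_apply] at hprod
    rw [hval] at hprod
    have hbig : HasDerivAt D (Aᵀ * D t + D t * A + C t) t := by
      refine hprod.congr_of_eventuallyEq ?_
      exact Filter.Eventually.of_forall fun s => key s
    have hfin := (e i j).hasFDerivAt.comp_hasDerivAt t hbig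
    have hfin2 : HasDerivAt (fun s => D s i j) ((e i j) (Aᵀ * D t + D t * A + C t)) t := hfin
    rwa [he] at hfin2
end

section
/- Let K be a positive integer, A a real K×K matrix with nonnegative off-diagonal entries (a Metzler matrix), λ a real number, and π ∈ ℝ^K a row vector with strictly positive entries such that π·A = λ·π. Then for every t ≥ 0 and all indices i, k, the entries of the mean matrix satisfy 0 ≤ (exp(tA))_{ik} ≤ (π_k / π_i) · e^{λt}. In particular each entry of exp(tA) grows at most at the exponential rate e^{λt} up to a constant factor. -/
open Matrix
open NormedSpace Nat

variable {K : ℕ}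

lemma matrix_exp_summable (M : Matrix (Fin K) (Fin K) ℝ) :
    Summable fun n : ℕ => ((n ! : ℝ))⁻¹ • M ^ n := by
  letI : SeminormedRing (Matrix (Fin K) (Fin K) ℝ) := Matrix.linftyOpSemiNormedRing
  letI : NormedRing (Matrix (Fin K) (Fin K) ℝ) := Matrix.linftyOpNormedRing
  letI : NormedAlgebra ℝ (Matrix (Fin K) (Fin K) ℝ) := Matrix.linftyOpNormedAlgebra
  exact expSeries_summable' (𝕂 := ℝ) M

lemma matrix_exp_entry_summable (M : Matrix (Fin K) (Fin K) ℝ) (i k : Fin K) :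
    Summable fun n : ℕ => ((n ! : ℝ))⁻¹ * ((M ^ n) i k) := by
  have h1 := matrix_exp_summable M
  have h2 : Summable fun n : ℕ => (((n ! : ℝ))⁻¹ • M ^ n) i := (Pi.summable.mp h1) i
  have h3 : Summable fun n : ℕ => (((n ! : ℝ))⁻¹ • M ^ n) i k := (Pi.summable.mp h2) k
  exact h3.congr fun n => by simp [Matrix.smul_apply, smul_eq_mul]

lemma matrix_exp_entry (M : Matrix (Fin K) (Fin K) ℝ) (i k : Fin K) :
    exp M i k = ∑' n : ℕ, ((n ! : ℝ))⁻¹ * ((M ^ n) i k) := by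
  have h1 : Summable fun n : ℕ => ((n ! : ℝ))⁻¹ • M ^ n := matrix_exp_summable M
  have h2 : Summable fun n : ℕ => (((n ! : ℝ))⁻¹ • M ^ n) i :=
    (Pi.summable.mp h1) i
  rw [exp_eq_tsum ℝ]
  rw [show (fun x : Matrix (Fin K) (Fin K) ℝ => ∑' n : ℕ, ((n ! : ℝ))⁻¹ • x ^ n) M = ∑' n : ℕ, ((n ! : ℝ))⁻¹ • M ^ n from rfl, show (∑' n : ℕ, ((n ! : ℝ))⁻¹ • M ^ n) i = ∑' n : ℕ, (((n ! : ℝ))⁻¹ • M ^ n) i from tsum_apply h1, tsum_apply h2]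
  simp [Matrix.smul_apply, smul_eq_mul]

lemma real_exp_tsum (x : ℝ) : Real.exp x = ∑' n : ℕ, ((n ! : ℝ))⁻¹ * x ^ n := by
  rw [Real.exp_eq_exp_ℝ, exp_eq_tsum ℝ]
  simp [smul_eq_mul]

lemma pow_entries_nonneg (M : Matrix (Fin K) (Fin K) ℝ) (hM : ∀ i j, 0 ≤ M i j) (n : ℕ) :
    ∀ i j, 0 ≤ (M ^ n) i j := by
  induction n with
  | zero =>
    intro i j
    rw [pow_zero, Matrix.one_apply]
    split <;> norm_num
  | succ n ih =>
    intro i j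
    rw [pow_succ, Matrix.mul_apply]
    exact Finset.sum_nonneg fun l _ => mul_nonneg (ih i l) (hM l j)

lemma matrix_exp_smul_one (r : ℝ) :
    exp (r • (1 : Matrix (Fin K) (Fin K) ℝ)) = Real.exp r • (1 : Matrix (Fin K) (Fin K) ℝ) := by
  rw [exp_eq_tsum ℝ]
  have h : ∀ n : ℕ, ((n ! : ℝ))⁻¹ • (r • (1 : Matrix (Fin K) (Fin K) ℝ)) ^ n
      = (((n ! : ℝ))⁻¹ * r ^ n) • (1 : Matrix (Fin K) (Fin K) ℝ) := by
    intro n; rw [smul_pow, one_pow, smul_smul]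
  simp_rw [h]
  have hs : Summable fun n : ℕ => ((n ! : ℝ))⁻¹ * r ^ n :=
    (Real.summable_pow_div_factorial r).congr fun n => by
      rw [div_eq_mul_inv, mul_comm]
  rw [Summable.tsum_smul_const hs, real_exp_tsum]

lemma matrix_vecMul_pow (A : Matrix (Fin K) (Fin K) ℝ) (lam : ℝ) (π : Fin K → ℝ)
    (hπ : π ᵥ* A = lam • π) (n : ℕ) : π ᵥ* (A ^ n) = (lam ^ n) • π := by
  induction n with
  | zero => simp [Matrix.vecMul_one]
  | succ n ih =>
    rw [pow_succ, ← Matrix.vecMul_vecMul, ih, Matrix.smul_vecMul, hπ, smul_smul, pow_succ]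



/-- Let `K` be a positive integer, `A` a real `K×K` Metzler matrix (nonnegative
off-diagonal entries), `λ` a real number, and `π ∈ ℝ^K` a row vector with strictly
positive entries such that `π·A = λ·π`. Then for every `t ≥ 0` and all indices `i, k`,
the entries of the mean matrix satisfy `0 ≤ (exp(tA))_{ik} ≤ (π_k / π_i) · e^{λt}`.
In particular each entry of `exp(tA)` grows at most at the exponential rate `e^{λt}`
up to a constant factor. -/
theorem matrix_exp_entry_bound_of_metzler
    (K : ℕ) (hK : 0 < K) (A : Matrix (Fin K) (Fin K) ℝ)
    (hA : ∀ i j : Fin K, i ≠ j → 0 ≤ A i j)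
    (lam : ℝ) (π : Fin K → ℝ) (hπpos : ∀ i, 0 < π i)
    (hπ : π ᵥ* A = lam • π) :
    ∀ t : ℝ, 0 ≤ t → ∀ i k : Fin K,
      0 ≤ NormedSpace.exp (t • A) i k ∧
        NormedSpace.exp (t • A) i k ≤ (π k / π i) * Real.exp (lam * t) := by
  intro t ht i k
  classical
  -- shift constant
  set c : ℝ := ∑ j : Fin K, |A j j| with hc
  have hcj : ∀ j : Fin K, |A j j| ≤ c :=
    fun j => Finset.single_le_sum (fun l _ => abs_nonneg (A l l)) (Finset.mem_univ j)
  set B : Matrix (Fin K) (Fin K) ℝ := A + c • (1 : Matrix (Fin K) (Fin K) ℝ) with hBdef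
  have hB : ∀ i j, 0 ≤ B i j := by
    intro i j
    by_cases hij : i = j
    · subst hij
      have h1 : B i i = A i i + c := by
        simp [hBdef, Matrix.add_apply, Matrix.smul_apply, Matrix.one_apply]
      rw [h1]
      have := neg_abs_le (A i i)
      have := hcj i
      linarith
    · have h1 : B i j = A i j := by
        simp [hBdef, Matrix.add_apply, Matrix.smul_apply, Matrix.one_apply, hij]
      rw [h1]
      exact hA i j hij
  have htB : ∀ i j, 0 ≤ (t • B) i j := by
    intro i j
    exact mul_nonneg ht (hB i j)
  -- split: t • A = (-(t*c)) • 1 + t • B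
  have hsplit : t • A = (-(t * c)) • (1 : Matrix (Fin K) (Fin K) ℝ) + t • B := by
    rw [hBdef, smul_add, smul_smul,
      add_comm (-(t * c) • (1 : Matrix (Fin K) (Fin K) ℝ)), add_assoc, ← add_smul]
    simp
  -- exp of split
  have hcomm : Commute ((-(t * c)) • (1 : Matrix (Fin K) (Fin K) ℝ)) (t • B) :=
    ((Commute.one_left (t • B)).smul_left _)
  have hexp : exp (t • A)
      = Real.exp (-(t * c)) • exp (t • B) := by
    rw [hsplit, Matrix.exp_add_of_commute _ _ hcomm, matrix_exp_smul_one,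
      smul_mul_assoc, one_mul]
  -- nonnegativity
  have hEB : ∀ i' k' : Fin K, 0 ≤ exp (t • B) i' k' := by
    intro i' k'
    rw [matrix_exp_entry]
    refine tsum_nonneg fun n => mul_nonneg (by positivity) ?_
    exact pow_entries_nonneg (t • B) htB n i' k'
  have hnonneg : ∀ i' k' : Fin K, 0 ≤ exp (t • A) i' k' := by
    intro i' k'
    rw [hexp]
    have : (Real.exp (-(t * c)) • exp (t • B)) i' k'
        = Real.exp (-(t * c)) * exp (t • B) i' k' := rfl
    rw [this]
    exact mul_nonneg (Real.exp_nonneg _) (hEB i' k')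
  refine ⟨hnonneg i k, ?_⟩
  -- key identity: ∑ j, π j * exp(tA) j k = exp(λ t) * π k
  have hsmM : ∀ (s : ℝ) (M : Matrix (Fin K) (Fin K) ℝ) (v : Fin K → ℝ),
      v ᵥ* (s • M) = s • (v ᵥ* M) := by
    intro s M v
    ext j
    simp only [Matrix.vecMul, dotProduct, Matrix.smul_apply, Pi.smul_apply, smul_eq_mul,
      Finset.mul_sum]
    exact Finset.sum_congr rfl fun l _ => by ring
  have heig : π ᵥ* (t • A) = (lam * t) • π := by
    rw [hsmM, hπ, smul_smul, mul_comm]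
  have hpow : ∀ n : ℕ, π ᵥ* ((t • A) ^ n) = ((lam * t) ^ n) • π :=
    matrix_vecMul_pow (t • A) (lam * t) π heig
  have hkey : ∑ j : Fin K, π j * exp (t • A) j k = Real.exp (lam * t) * π k := by
    have h1 : ∀ j : Fin K, π j * exp (t • A) j k
        = ∑' n : ℕ, π j * (((n ! : ℝ))⁻¹ * (((t • A) ^ n) j k)) := by
      intro j
      rw [matrix_exp_entry, ← tsum_mul_left]
    calc ∑ j : Fin K, π j * exp (t • A) j k
        = ∑ j : Fin K, ∑' n : ℕ, π j * (((n ! : ℝ))⁻¹ * (((t • A) ^ n) j k)) := by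
          exact Finset.sum_congr rfl fun j _ => h1 j
      _ = ∑' n : ℕ, ∑ j : Fin K, π j * (((n ! : ℝ))⁻¹ * (((t • A) ^ n) j k)) := by
          refine (Summable.tsum_finsetSum ?_).symm
          intro j _
          exact (matrix_exp_entry_summable (t • A) j k).mul_left (π j)
      _ = ∑' n : ℕ, ((n ! : ℝ))⁻¹ * ((lam * t) ^ n * π k) := by
          refine tsum_congr fun n => ?_
          have h2 : ∑ j : Fin K, π j * (((t • A) ^ n) j k) = (π ᵥ* ((t • A) ^ n)) k := by
            rw [Matrix.vecMul, dotProduct]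
          calc ∑ j : Fin K, π j * (((n ! : ℝ))⁻¹ * (((t • A) ^ n) j k))
              = ((n ! : ℝ))⁻¹ * ∑ j : Fin K, π j * (((t • A) ^ n) j k) := by
                rw [Finset.mul_sum]; exact Finset.sum_congr rfl fun j _ => by ring
            _ = ((n ! : ℝ))⁻¹ * ((lam * t) ^ n * π k) := by
                rw [h2, hpow n]; rfl
      _ = (∑' n : ℕ, ((n ! : ℝ))⁻¹ * (lam * t) ^ n) * π k := by
          rw [← tsum_mul_right]
          exact tsum_congr fun n => by ring
      _ = Real.exp (lam * t) * π k := by rw [← real_exp_tsum]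
  -- conclude
  have hle : π i * exp (t • A) i k ≤ Real.exp (lam * t) * π k := by
    rw [← hkey]
    exact Finset.single_le_sum
      (fun j _ => mul_nonneg (hπpos j).le (hnonneg j k)) (Finset.mem_univ i)
  rw [div_mul_eq_mul_div, le_div_iff₀ (hπpos i)]
  nlinarith [hπpos i, hπpos k]
end
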